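/- Let $L$ be a Lie algebroid over $M$ and suppose $L_1, L_2$ are sub-Lie algebroids of $L$ with $L = L_1 \oplus L_2$ as vector bundles. Then the projections of the bracket define a flat $L_1$-connection on $L_2$ and a flat $L_2$-connection on $L_1$, and these satisfy the matched pair equations, making $(L_1, L_2)$ a matched pair of Lie algebroids. -/

import Mathlib

structure LieAlgebroid (k R L : Type*) [CommRing k] [CommRing R] [Algebra k R]
    [LieRing L] [LieAlgebra k L] [Module R L] [IsScalarTower k R L] where
  anchor : L →ₗ[R] Derivation k R R
  anchor_bracket : ∀ u v : L, anchor ⁅u, v⁆ = ⁅anchor u, anchor v⁆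
  leibniz : ∀ (u v : L) (f : R), ⁅u, f • v⁆ = f • ⁅u, v⁆ + anchor u f • v

structure LieAlgebroid.Connection {k R L : Type*} [CommRing k] [CommRing R] [Algebra k R]

/-! Split every bracket as `x = pr₁ x + pr₂ x`. The Leibniz rules are those of `L`, since each
projection fixes its own summand, and the anchor equation is `a ⁅u₁, u₂⁆ = ⁅a u₁, a u₂⁆` applied to
this splitting. Flatness and the remaining matched pair equations are the Jacobi identity of `L`
projected to one summand: because both summands are closed under the bracket, the cross terms
either vanish or can be moved inside the projection. -/

section ComplementaryProjections

variable {R L : Type*} [CommRing R] [LieRing L] [Module R L]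
  {B : Submodule R L} {p q : L →ₗ[R] L}

theorem apply_eq_zero_of_add_eq_of_apply_eq_self {x : L}
    (hpq : p x + q x = x) (hp : p x = x) : q x = 0 := by
  rwa [hp, add_eq_left] at hpq

theorem proj_lie_proj_of_mem (hpq : ∀ x, p x + q x = x) (hp_mem : ∀ x, p x ∈ B)
    (hB : ∀ u v, u ∈ B → v ∈ B → ⁅u, v⁆ ∈ B) (hq_eq_zero : ∀ x ∈ B, q x = 0)
    {u : L} (hu : u ∈ B) (x : L) : q ⁅u, q x⁆ = q ⁅u, x⁆ := by
  rw [eq_sub_of_add_eq' (hpq x), lie_sub, map_sub, hq_eq_zero _ (hB _ _ hu (hp_mem x)),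
    sub_zero]

theorem proj_lie_proj_sub_proj_lie_proj (hpq : ∀ x, p x + q x = x) (hp_mem : ∀ x, p x ∈ B)
    (hB : ∀ u v, u ∈ B → v ∈ B → ⁅u, v⁆ ∈ B) (hq_eq_zero : ∀ x ∈ B, q x = 0)
    {u v : L} (hu : u ∈ B) (hv : v ∈ B) (w : L) :
    q ⁅u, q ⁅v, w⁆⁆ - q ⁅v, q ⁅u, w⁆⁆ = q ⁅⁅u, v⁆, w⁆ := by
  rw [proj_lie_proj_of_mem hpq hp_mem hB hq_eq_zero hu,
    proj_lie_proj_of_mem hpq hp_mem hB hq_eq_zero hv, ← map_sub, lie_lie]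

theorem proj_lie_of_mem (hpq : ∀ x, p x + q x = x) (hq_mem : ∀ x, q x ∈ B)
    (hB : ∀ u v, u ∈ B → v ∈ B → ⁅u, v⁆ ∈ B) (hq_eq_self : ∀ x ∈ B, q x = x)
    {w : L} (hw : w ∈ B) (y : L) : q ⁅y, w⁆ = q ⁅p y, w⁆ + ⁅q y, w⁆ := by
  conv_lhs => rw [← hpq y]
  rw [add_lie, map_add, hq_eq_self _ (hB _ _ (hq_mem y) hw)]

theorem proj_lie_lie_of_mem (hpq : ∀ x, p x + q x = x) (hq_mem : ∀ x, q x ∈ B)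
    (hB : ∀ u v, u ∈ B → v ∈ B → ⁅u, v⁆ ∈ B) (hq_eq_self : ∀ x ∈ B, q x = x)
    (u : L) {v w : L} (hv : v ∈ B) (hw : w ∈ B) :
    q ⁅u, ⁅v, w⁆⁆ =
      ⁅q ⁅u, v⁆, w⁆ + ⁅v, q ⁅u, w⁆⁆ + q ⁅p ⁅w, u⁆, v⁆ - q ⁅p ⁅v, u⁆, w⁆ := by
  have hjacobi : q ⁅u, ⁅v, w⁆⁆ = q ⁅⁅u, v⁆, w⁆ - q ⁅⁅u, w⁆, v⁆ := by
    rw [leibniz_lie, ← lie_skew v, map_add, map_neg, sub_eq_add_neg]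
  have hskew : ∀ a b : L, p ⁅a, b⁆ = -p ⁅b, a⁆ := fun a b => by rw [← map_neg, lie_skew]
  rw [hjacobi, proj_lie_of_mem hpq hq_mem hB hq_eq_self hw ⁅u, v⁆,
    proj_lie_of_mem hpq hq_mem hB hq_eq_self hv ⁅u, w⁆, hskew u v, hskew u w,
    ← lie_skew v (q ⁅u, w⁆)]
  simp only [neg_lie, map_neg]
  abel

end ComplementaryProjections

namespace LieAlgebroid

variable {k R L : Type*} [CommRing k] [CommRing R] [Algebra k R]
  [LieRing L] [LieAlgebra k L] [Module R L] [IsScalarTower k R L]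

theorem proj_lie_smul (A : LieAlgebroid k R L) (p : L →ₗ[R] L) (u : L) {v : L} (hv : p v = v)
    (f : R) : p ⁅u, f • v⁆ = f • p ⁅u, v⁆ + A.anchor u f • v := by
  rw [A.leibniz, map_add, map_smul, map_smul, hv]

theorem lie_anchor_anchor (A : LieAlgebroid k R L) {p q : L →ₗ[R] L}
    (hpq : ∀ x, p x + q x = x) (u v : L) :
    ⁅A.anchor u, A.anchor v⁆ = -A.anchor (p ⁅v, u⁆) + A.anchor (q ⁅u, v⁆) := by
  rw [← A.anchor_bracket, ← lie_skew v u, map_neg, map_neg, neg_neg, ← map_add, hpq]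

end LieAlgebroid

/-- If a Lie algebroid `L` decomposes as a direct sum `L = L₁ ⊕ L₂` of two
sub-Lie algebroids, then the projected brackets `∇_{u₁}u₂ = pr₂{u₁,u₂}`,
`∇_{u₂}u₁ = pr₁{u₂,u₁}` define a flat `L₁`-connection on `L₂` and a flat
`L₂`-connection on `L₁` satisfying the matched pair equations:
`(L₁, L₂)` is a matched pair of Lie algebroids. -/
theorem subalgebroid_decomposition_matchedPair {k R L : Type*}
    [CommRing k] [CommRing R] [Algebra k R]
    [LieRing L] [LieAlgebra k L] [Module R L] [IsScalarTower k R L]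
    (A : LieAlgebroid k R L) (L₁ L₂ : Submodule R L)
    (hc₁ : ∀ u v, u ∈ L₁ → v ∈ L₁ → ⁅u, v⁆ ∈ L₁)
    (hc₂ : ∀ u v, u ∈ L₂ → v ∈ L₂ → ⁅u, v⁆ ∈ L₂)
    (pr₁ pr₂ : L →ₗ[R] L)
    (hr₁ : ∀ x, pr₁ x ∈ L₁) (hr₂ : ∀ x, pr₂ x ∈ L₂)
    (hsum : ∀ x, pr₁ x + pr₂ x = x)
    (hid₁ : ∀ x ∈ L₁, pr₁ x = x) (hid₂ : ∀ x ∈ L₂, pr₂ x = x) :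
    -- ∇_{u₁}u₂ := pr₂ ⁅u₁, u₂⁆ is an L₁-connection on L₂ (Leibniz rule) and it is flat
    (∀ u₁ ∈ L₁, ∀ u₂ ∈ L₂, ∀ f : R,
      pr₂ ⁅u₁, f • u₂⁆ = f • pr₂ ⁅u₁, u₂⁆ + A.anchor u₁ f • u₂) ∧
    (∀ u₁ ∈ L₁, ∀ v₁ ∈ L₁, ∀ u₂ ∈ L₂,
      pr₂ ⁅u₁, pr₂ ⁅v₁, u₂⁆⁆ - pr₂ ⁅v₁, pr₂ ⁅u₁, u₂⁆⁆ = pr₂ ⁅⁅u₁, v₁⁆, u₂⁆) ∧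
    -- ∇_{u₂}u₁ := pr₁ ⁅u₂, u₁⁆ is an L₂-connection on L₁ (Leibniz rule) and it is flat
    (∀ u₂ ∈ L₂, ∀ u₁ ∈ L₁, ∀ f : R,
      pr₁ ⁅u₂, f • u₁⁆ = f • pr₁ ⁅u₂, u₁⁆ + A.anchor u₂ f • u₁) ∧
    (∀ u₂ ∈ L₂, ∀ v₂ ∈ L₂, ∀ u₁ ∈ L₁,
      pr₁ ⁅u₂, pr₁ ⁅v₂, u₁⁆⁆ - pr₁ ⁅v₂, pr₁ ⁅u₂, u₁⁆⁆ = pr₁ ⁅⁅u₂, v₂⁆, u₁⁆) ∧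
    -- matched pair equation (i): compatibility of anchors
    (∀ u₁ ∈ L₁, ∀ u₂ ∈ L₂,
      ⁅A.anchor u₁, A.anchor u₂⁆ =
        -A.anchor (pr₁ ⁅u₂, u₁⁆) + A.anchor (pr₂ ⁅u₁, u₂⁆)) ∧
    -- matched pair equation (ii)
    (∀ u₁ ∈ L₁, ∀ u₂ ∈ L₂, ∀ v₂ ∈ L₂,
      pr₂ ⁅u₁, ⁅u₂, v₂⁆⁆ =
        ⁅pr₂ ⁅u₁, u₂⁆, v₂⁆ + ⁅u₂, pr₂ ⁅u₁, v₂⁆⁆ +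
          pr₂ ⁅pr₁ ⁅v₂, u₁⁆, u₂⁆ - pr₂ ⁅pr₁ ⁅u₂, u₁⁆, v₂⁆) ∧
    -- matched pair equation (iii)
    (∀ u₂ ∈ L₂, ∀ u₁ ∈ L₁, ∀ v₁ ∈ L₁,
      pr₁ ⁅u₂, ⁅u₁, v₁⁆⁆ =
        ⁅pr₁ ⁅u₂, u₁⁆, v₁⁆ + ⁅u₁, pr₁ ⁅u₂, v₁⁆⁆ +
          pr₁ ⁅pr₂ ⁅v₁, u₂⁆, u₁⁆ - pr₁ ⁅pr₂ ⁅u₁, u₂⁆, v₁⁆) := by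
  have hsum' : ∀ x, pr₂ x + pr₁ x = x := fun x => by rw [add_comm, hsum]
  have hz₂ : ∀ x ∈ L₁, pr₂ x = 0 := fun x hx =>
    apply_eq_zero_of_add_eq_of_apply_eq_self (hsum x) (hid₁ x hx)
  have hz₁ : ∀ x ∈ L₂, pr₁ x = 0 := fun x hx =>
    apply_eq_zero_of_add_eq_of_apply_eq_self (hsum' x) (hid₂ x hx)
  refine ⟨fun u₁ _ u₂ h₂ => A.proj_lie_smul pr₂ u₁ (hid₂ u₂ h₂),
    fun _ h₁ _ hv₁ u₂ _ => proj_lie_proj_sub_proj_lie_proj hsum hr₁ hc₁ hz₂ h₁ hv₁ u₂,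
    fun u₂ _ u₁ h₁ => A.proj_lie_smul pr₁ u₂ (hid₁ u₁ h₁),
    fun _ h₂ _ hv₂ u₁ _ => proj_lie_proj_sub_proj_lie_proj hsum' hr₂ hc₂ hz₁ h₂ hv₂ u₁,
    fun u₁ _ u₂ _ => A.lie_anchor_anchor hsum u₁ u₂,
    fun u₁ _ _ h₂ _ hv₂ => proj_lie_lie_of_mem hsum hr₂ hc₂ hid₂ u₁ h₂ hv₂,
    fun u₂ _ _ h₁ _ hv₁ => proj_lie_lie_of_mem hsum' hr₁ hc₁ hid₁ u₂ h₁ hv₁⟩
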